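/- Let d ≥ 1 be an integer and let V : ℝ^d × ℝ^d → ℝ be twice continuously differentiable with the operator norm of its second derivative bounded by V̄, and invariant under simultaneous translations: V(x + u, y + u) = V(x, y) for all x, y, u ∈ ℝ^d. Then for all x, y, θ ∈ ℝ^d and all reals γ, γ', |V(x + γθ, y + γ'θ) + V(x − γθ, y − γ'θ) − 2·V(x, y)| ≤ V̄·(γ − γ')²·‖θ‖². -/

import Mathlib

/-!
By translation invariance `V (x + γ • θ, y + γ' • θ) = V (x + (γ - γ') • θ, y)`, so the left-hand
side is the second difference of `V` at `(x, y)` in the direction `h = ((γ - γ') • θ, 0)`, whose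
norm is `|γ - γ'| * ‖θ‖`. A second difference is at most the Lipschitz constant of the derivative
times `‖h‖ ^ 2`, and the bound on the second derivative is such a Lipschitz constant.
-/

section SecondDifference

variable {E F : Type*} [NormedAddCommGroup E] [NormedSpace ℝ E]
  [NormedAddCommGroup F] [NormedSpace ℝ F]

theorem norm_fderiv_sub_le_of_norm_iteratedFDeriv_two_le {f : E → F} {C : ℝ}
    (hf : ContDiff ℝ 2 f) (hC : ∀ p, ‖iteratedFDeriv ℝ 2 f p‖ ≤ C) (p q : E) :
    ‖fderiv ℝ f p - fderiv ℝ f q‖ ≤ C * ‖p - q‖ := by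
  have hdiff : Differentiable ℝ (fderiv ℝ f) :=
    (hf.fderiv_right (m := 1) le_rfl).differentiable one_ne_zero
  refine convex_univ.norm_image_sub_le_of_norm_fderiv_le (fun z _ ↦ hdiff z) (fun z _ ↦ ?_)
    (Set.mem_univ q) (Set.mem_univ p)
  calc ‖fderiv ℝ (fderiv ℝ f) z‖ = ‖iteratedFDeriv ℝ 2 f z‖ := by
        rw [← norm_iteratedFDeriv_fderiv, ← norm_iteratedFDeriv_fderiv, norm_iteratedFDeriv_zero]
    _ ≤ C := hC z

/-- `t ↦ f (p + t • h) - f (p + t • h - h)` has derivative of norm at most `C * ‖h‖ ^ 2`, and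
its increment between `t = 0` and `t = 1` is the second difference. -/
theorem norm_add_add_sub_two_smul_le_of_lipschitz_fderiv {f : E → F} {C : ℝ}
    (hf : Differentiable ℝ f) (hC : ∀ p q, ‖fderiv ℝ f p - fderiv ℝ f q‖ ≤ C * ‖p - q‖)
    (p h : E) : ‖f (p + h) + f (p - h) - (2 : ℝ) • f p‖ ≤ C * ‖h‖ ^ 2 := by
  set G : ℝ → F := fun t ↦ f (p + t • h) - f (p + t • h - h)
  set G' : ℝ → F := fun t ↦ fderiv ℝ f (p + t • h) h - fderiv ℝ f (p + t • h - h) h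
  have hline : ∀ t, HasDerivAt (fun t : ℝ ↦ p + t • h) h t := fun t ↦ by
    simpa using ((hasDerivAt_id t).smul_const h).const_add p
  have hG : ∀ t, HasDerivAt G (G' t) t := fun t ↦
    ((hf _).hasFDerivAt.comp_hasDerivAt t (hline t)).sub
      ((hf _).hasFDerivAt.comp_hasDerivAt t ((hline t).sub_const h))
  have hG' : ∀ t, ‖G' t‖ ≤ C * ‖h‖ ^ 2 := fun t ↦ calc
    ‖G' t‖ = ‖(fderiv ℝ f (p + t • h) - fderiv ℝ f (p + t • h - h)) h‖ := rfl
    _ ≤ ‖fderiv ℝ f (p + t • h) - fderiv ℝ f (p + t • h - h)‖ * ‖h‖ :=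
      ContinuousLinearMap.le_opNorm _ _
    _ ≤ C * ‖h‖ * ‖h‖ := by
      gcongr
      simpa using hC (p + t • h) (p + t • h - h)
    _ = C * ‖h‖ ^ 2 := by ring
  have hmvt := convex_univ.norm_image_sub_le_of_norm_hasDerivWithin_le
    (fun t _ ↦ (hG t).hasDerivWithinAt) (fun t _ ↦ hG' t) (Set.mem_univ 0) (Set.mem_univ 1)
  have hG01 : G 1 - G 0 = f (p + h) + f (p - h) - (2 : ℝ) • f p := by
    simp only [G, one_smul, zero_smul, add_zero, add_sub_cancel_right, two_smul]
    abel
  simpa [hG01] using hmvt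

end SecondDifference

theorem apply_add_add_eq_apply_add_sub {E R : Type*} [AddCommGroup E] {V : E × E → R}
    (hinv : ∀ x y u, V (x + u, y + u) = V (x, y)) (x y a b : E) :
    V (x + a, y + b) = V (x + (a - b), y) := by
  rw [← hinv (x + (a - b)) y b, add_assoc, sub_add_cancel]

theorem tuned_action_second_order_estimate_general
    (d : ℕ)
    (V : EuclideanSpace ℝ (Fin d) × EuclideanSpace ℝ (Fin d) → ℝ) (Vbar : ℝ)
    (hV : ContDiff ℝ 2 V)
    (hbound : ∀ p : EuclideanSpace ℝ (Fin d) × EuclideanSpace ℝ (Fin d),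
      ‖iteratedFDeriv ℝ 2 V p‖ ≤ Vbar)
    (hinv : ∀ x y u : EuclideanSpace ℝ (Fin d), V (x + u, y + u) = V (x, y))
    (x y θ : EuclideanSpace ℝ (Fin d)) (γ γ' : ℝ) :
    |V (x + γ • θ, y + γ' • θ) + V (x - γ • θ, y - γ' • θ) - 2 * V (x, y)|
      ≤ Vbar * (γ - γ') ^ 2 * ‖θ‖ ^ 2 := by
  set h : EuclideanSpace ℝ (Fin d) × EuclideanSpace ℝ (Fin d) := ((γ - γ') • θ, 0)
  have hplus : V (x + γ • θ, y + γ' • θ) = V ((x, y) + h) := by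
    rw [apply_add_add_eq_apply_add_sub hinv, ← sub_smul]; simp [h]
  have hminus : V (x - γ • θ, y - γ' • θ) = V ((x, y) - h) := by
    rw [sub_eq_add_neg x, sub_eq_add_neg y, apply_add_add_eq_apply_add_sub hinv]
    congr 1
    simp only [sub_neg_eq_add, sub_smul, Prod.mk_sub_mk, sub_zero, Prod.ext_iff, and_true, h]
    abel
  have hnorm : ‖h‖ = |γ - γ'| * ‖θ‖ := by simp [h, Prod.norm_def, norm_smul, mul_nonneg]
  have hsecond := norm_add_add_sub_two_smul_le_of_lipschitz_fderiv (hV.differentiable two_ne_zero)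
    (norm_fderiv_sub_le_of_norm_iteratedFDeriv_two_le hV hbound) (x, y) h
  rw [hplus, hminus, ← smul_eq_mul]
  calc _ ≤ Vbar * ‖h‖ ^ 2 := hsecond
    _ = Vbar * (γ - γ') ^ 2 * ‖θ‖ ^ 2 := by rw [hnorm, mul_pow, sq_abs, mul_assoc]

/-- Mermin–Wagner tuned-action estimate for a translation
invariant two-body potential: if `V : ℝ^d × ℝ^d → ℝ` is `C²` with second
derivative bounded by `V̄` and `V(x+u, y+u) = V(x,y)` for all `u`, then
`|V(x+γθ, y+γ'θ) + V(x−γθ, y−γ'θ) − 2 V(x,y)| ≤ V̄ (γ−γ')² ‖θ‖²`. -/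
theorem tuned_action_second_order_estimate
    (d : ℕ) (hd : 1 ≤ d)
    (V : EuclideanSpace ℝ (Fin d) × EuclideanSpace ℝ (Fin d) → ℝ) (Vbar : ℝ)
    (hV : ContDiff ℝ 2 V)
    (hbound : ∀ p : EuclideanSpace ℝ (Fin d) × EuclideanSpace ℝ (Fin d),
      ‖iteratedFDeriv ℝ 2 V p‖ ≤ Vbar)
    (hinv : ∀ x y u : EuclideanSpace ℝ (Fin d), V (x + u, y + u) = V (x, y))
    (x y θ : EuclideanSpace ℝ (Fin d)) (γ γ' : ℝ) :
    |V (x + γ • θ, y + γ' • θ) + V (x - γ • θ, y - γ' • θ) - 2 * V (x, y)|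
      ≤ Vbar * (γ - γ') ^ 2 * ‖θ‖ ^ 2 :=
  tuned_action_second_order_estimate_general d V Vbar hV hbound hinv x y θ γ γ'
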